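/- Define S_m(n) = Σ_{k=0}^{n/2^{m+1}} r_{m-1}(2^m·k) for m ≥ 1 and n ≡ 0 (mod 2^{m+1}). Then for every integer n' ≥ 1, S_m(2^{m+2}·n') = S_m(2^{m+2}·n' − 2^{m+1}) + Σ_{j=0}^{⌊(m+1)/2⌋} C(m+1, 2j) · S_m((2^{m+2}·n' − 2j·2^{m+1})/2). -/

import Mathlib

/-!
Deleting the parts equal to `1` from a binary partition of `N` leaves twice a binary partition of
some `w ≤ N / 2`. Hence `b(2n) = b(2n+1) = ∑_{w ≤ n} b(w)` for the number `b` of binary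
partitions, and the divisibility conditions make `r_{p-1}(2^p k)` the `p`-fold iterated partial
sum `G_p(k)` of `b`, so that `S_m(2^{m+1} t) = G_{m+1}(t)`. In generating functions
`B(x) = B(x²) / (1 - x)`, so `G_p(x) = B(x) / (1 - x)^p = (1 + x)^{p+1} G_{p+1}(x²)`; reading off
the even coefficients gives `G_p(2n) = ∑_j C(p+1, 2j) G_{p+1}(n - j)`, proved below by induction
on `p` with Pascal's rule. The theorem is this identity for `p = m`, added to
`G_{m+1}(2n') = G_{m+1}(2n' - 1) + G_m(2n')`.
-/

/-- The integer partitioned by the binary partition `α`, where `α i` is the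
number of parts equal to `2 ^ i` (so `α i` is the `α_{i+1}` of the paper). -/
def binWeight (α : ℕ →₀ ℕ) : ℕ := α.sum fun i a => a * 2 ^ i

/-- `Pm m n` is the set of binary partitions of `n` satisfying the divisibility
conditions `2 ^ (m + 2 - i) ∣ α_i` for `1 ≤ i ≤ m + 1` (written here with the
index shifted down by one).  For `n < 0` the set is empty. -/
def Pm (m : ℕ) (n : ℤ) : Set (ℕ →₀ ℕ) :=
  {α | (binWeight α : ℤ) = n ∧ ∀ i ≤ m, 2 ^ (m + 1 - i) ∣ α i}

/-- `r m n` is the number of binary partitions of `n` satisfying the divisibility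
conditions `2 ^ (m + 2 - i) ∣ α_i` for `1 ≤ i ≤ m + 1`. -/
noncomputable def r (m : ℕ) (n : ℤ) : ℕ := Nat.card (Pm m n)

/-- `S m x = Σ_{k=0}^{x/2^(m+1)} r_{m-1}(2^m k)` when `x` is a nonnegative
multiple of `2^(m+1)`, and `S m x = 0` otherwise. -/
noncomputable def S (m : ℕ) (x : ℤ) : ℕ :=
  if 0 ≤ x ∧ (2 : ℤ) ^ (m + 1) ∣ x then
    ∑ k ∈ Finset.range ((x / 2 ^ (m + 1)).toNat + 1), r (m - 1) (2 ^ m * (k : ℤ))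
  else 0

open Finset

section PartialSum

variable {M : Type*} [AddCommMonoid M]

/-- `∑_{0 ≤ k ≤ x} f k`, an empty sum for `x < 0`. -/
def partialSum (f : ℤ → M) (x : ℤ) : M := ∑ k ∈ range (x + 1).toNat, f k

theorem partialSum_of_neg (f : ℤ → M) {x : ℤ} (hx : x < 0) : partialSum f x = 0 := by
  rw [partialSum, Int.toNat_of_nonpos (by omega), sum_range_zero]

theorem partialSum_natCast (f : ℤ → M) (n : ℕ) :
    partialSum f n = ∑ k ∈ range (n + 1), f k := by
  rw [partialSum, show ((n : ℤ) + 1).toNat = n + 1 by omega]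

theorem partialSum_eq_partialSum_sub_one_add (f : ℤ → M) {x : ℤ} (hx : 0 ≤ x) :
    partialSum f x = partialSum f (x - 1) + f x := by
  rw [partialSum, partialSum, show (x + 1).toNat = (x - 1 + 1).toNat + 1 by omega,
    sum_range_succ, show ((x - 1 + 1).toNat : ℤ) = x by omega]

theorem partialSum_comp_sub {g : ℤ → M} (hg : ∀ x < 0, g x = 0) (j : ℕ) (x : ℤ) :
    partialSum (fun a => g (a - j)) x = partialSum g (x - j) := by
  rcases lt_or_ge x j with hxj | hxj
  · rw [partialSum_of_neg g (by omega), partialSum]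
    exact sum_eq_zero fun k hk => hg _ (by rw [mem_range] at hk; omega)
  · obtain ⟨N, hN⟩ : ∃ N : ℕ, x - j = N := ⟨(x - j).toNat, by omega⟩
    rw [hN, partialSum_natCast, partialSum, show (x + 1).toNat = j + (N + 1) by omega,
      sum_range_add, sum_eq_zero fun k hk => hg _ (by rw [mem_range] at hk; omega), zero_add]
    simp

theorem partialSum_sum_smul_comp_sub {g : ℤ → M} (hg : ∀ x < 0, g x = 0) (s : Finset ℕ)
    (c : ℕ → ℕ) (x : ℤ) :
    partialSum (fun a => ∑ j ∈ s, c j • g (a - j)) x = ∑ j ∈ s, c j • partialSum g (x - j) := by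
  simp_rw [← partialSum_comp_sub hg, partialSum, smul_sum]
  exact sum_comm

theorem partialSum_two_mul_add_one (f : ℤ → M) (n : ℤ) :
    partialSum f (2 * n + 1) =
      partialSum (fun a => f (2 * a)) n + partialSum (fun a => f (2 * a + 1)) n := by
  rcases lt_or_ge n 0 with hn | hn
  · rw [partialSum_of_neg _ (by omega), partialSum_of_neg _ hn, partialSum_of_neg _ hn, add_zero]
  lift n to ℕ using hn
  induction n with
  | zero => simp [partialSum, sum_range_succ]
  | succ n ih =>
    have step := partialSum_eq_partialSum_sub_one_add (M := M)
    push_cast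
    rw [step f (by omega), step f (x := 2 * ((n : ℤ) + 1) + 1 - 1) (by omega),
      step _ (x := (n : ℤ) + 1) (by omega), step _ (x := (n : ℤ) + 1) (by omega)]
    simp only [add_sub_cancel_right, show 2 * ((n : ℤ) + 1) - 1 = 2 * n + 1 by ring, ih]
    abel

theorem partialSum_two_mul (f : ℤ → M) (n : ℤ) :
    partialSum f (2 * n) =
      partialSum (fun a => f (2 * a)) n + partialSum (fun a => f (2 * a + 1)) (n - 1) := by
  rcases lt_or_ge n 0 with hn | hn
  · rw [partialSum_of_neg _ (by omega), partialSum_of_neg _ hn, partialSum_of_neg _ (by omega),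
      add_zero]
  rw [partialSum_eq_partialSum_sub_one_add f (by omega),
    show 2 * n - 1 = 2 * (n - 1) + 1 by ring, partialSum_two_mul_add_one,
    partialSum_eq_partialSum_sub_one_add (fun a => f (2 * a)) hn]
  abel

end PartialSum

section Dissection

variable {M : Type*} [AddCommMonoid M]

theorem sum_choose_two_mul_add_sum_choose_two_mul_add_one_succ (h : ℕ → M) (q : ℕ) :
    ∑ j ∈ range (q + 1), q.choose (2 * j) • h j +
        ∑ j ∈ range (q + 1), q.choose (2 * j + 1) • h (j + 1) =
      ∑ j ∈ range (q + 2), (q + 1).choose (2 * j) • h j := by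
  have hextend : ∑ j ∈ range q, q.choose (2 * (j + 1)) • h (j + 1) =
      ∑ j ∈ range (q + 1), q.choose (2 * (j + 1)) • h (j + 1) := by
    rw [sum_range_succ, Nat.choose_eq_zero_of_lt (by omega), zero_smul, add_zero]
  rw [sum_range_succ' _ (q + 1), sum_range_succ' (fun j => q.choose (2 * j) • h j), hextend,
    add_right_comm, ← sum_add_distrib]
  simp only [mul_zero, Nat.choose_zero_right]
  congr 1
  refine sum_congr rfl fun j _ => ?_
  rw [← add_smul, add_comm, show 2 * (j + 1) = 2 * j + 1 + 1 by ring, Nat.choose_succ_succ']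

theorem sum_choose_two_mul_add_sum_choose_two_mul_add_one (h : ℕ → M) (q : ℕ) :
    ∑ j ∈ range (q + 1), q.choose (2 * j) • h j +
        ∑ j ∈ range (q + 1), q.choose (2 * j + 1) • h j =
      ∑ j ∈ range (q + 2), (q + 1).choose (2 * j + 1) • h j := by
  rw [sum_range_succ _ (q + 1), Nat.choose_eq_zero_of_lt (by omega : q + 1 < 2 * (q + 1) + 1),
    zero_smul, add_zero, ← sum_add_distrib]
  exact sum_congr rfl fun j _ => by rw [Nat.choose_succ_succ', add_smul]

/-- In generating functions: `g(x) = (1 + x)^q G(x²)` where `G` is that of `partialSum g`. -/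
def BinomialDissection (q : ℕ) (g : ℤ → M) : Prop :=
  (∀ n, g (2 * n) = ∑ j ∈ range (q + 1), q.choose (2 * j) • partialSum g (n - j)) ∧
    ∀ n, g (2 * n + 1) = ∑ j ∈ range (q + 1), q.choose (2 * j + 1) • partialSum g (n - j)

theorem binomialDissection_one {f : ℤ → M} (hev : ∀ n, f (2 * n) = partialSum f n)
    (hodd : ∀ n, f (2 * n + 1) = partialSum f n) : BinomialDissection 1 f := by
  constructor <;> intro n <;> simp [sum_range_succ, hev, hodd, Nat.choose_eq_zero_of_lt]

theorem BinomialDissection.succ_partialSum {q : ℕ} {g : ℤ → M} (hg : BinomialDissection q g) :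
    BinomialDissection (q + 1) (partialSum g) := by
  obtain ⟨hev, hodd⟩ := hg
  have hvan : ∀ x < 0, partialSum g x = 0 := fun x hx => partialSum_of_neg g hx
  constructor <;> intro n
  · rw [partialSum_two_mul]
    simp_rw [hev, hodd, partialSum_sum_smul_comp_sub hvan]
    convert sum_choose_two_mul_add_sum_choose_two_mul_add_one_succ
      (fun j : ℕ => partialSum (partialSum g) (n - j)) q using 5
    push_cast
    ring
  · rw [partialSum_two_mul_add_one]
    simp_rw [hev, hodd, partialSum_sum_smul_comp_sub hvan]
    exact sum_choose_two_mul_add_sum_choose_two_mul_add_one _ q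

theorem BinomialDissection.iterate {f : ℤ → M} (hf : BinomialDissection 1 f) (p : ℕ) :
    BinomialDissection (p + 1) (partialSum^[p] f) := by
  induction p with
  | zero => exact hf
  | succ p ih => rw [Function.iterate_succ_apply']; exact ih.succ_partialSum

end Dissection

namespace Finsupp

variable {M : Type*} [AddZeroClass M]

noncomputable def natTail (α : ℕ →₀ M) : ℕ →₀ M :=
  α.comapDomain (· + 1) (add_left_injective 1).injOn

noncomputable def natCons (a : M) (β : ℕ →₀ M) : ℕ →₀ M :=
  single 0 a + β.embDomain (addRightEmbedding 1)

@[simp]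
theorem natTail_apply (α : ℕ →₀ M) (i : ℕ) : natTail α i = α (i + 1) := rfl

@[simp]
theorem natCons_zero (a : M) (β : ℕ →₀ M) : natCons a β 0 = a := by
  simp [natCons, embDomain_of_notMem_range]

@[simp]
theorem natCons_succ (a : M) (β : ℕ →₀ M) (i : ℕ) : natCons a β (i + 1) = β i := by
  simpa [natCons] using embDomain_apply_self (addRightEmbedding 1) β i

@[simp]
theorem natTail_natCons (a : M) (β : ℕ →₀ M) : natTail (natCons a β) = β := by
  ext i
  simp

theorem natCons_natTail (α : ℕ →₀ M) : natCons (α 0) (natTail α) = α := by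
  ext (_ | i) <;> simp

end Finsupp

open Finsupp

theorem binWeight_natCons (a : ℕ) (β : ℕ →₀ ℕ) :
    binWeight (natCons a β) = a + 2 * binWeight β := by
  rw [binWeight, natCons, sum_add_index' (by simp) (fun _ _ _ => add_mul _ _ _),
    sum_single_index (by simp), sum_embDomain, binWeight, Finsupp.mul_sum]
  simp [pow_succ, mul_comm, mul_left_comm]

theorem binWeight_eq_apply_zero_add (α : ℕ →₀ ℕ) :
    binWeight α = α 0 + 2 * binWeight (natTail α) := by
  conv_lhs => rw [← natCons_natTail α]
  exact binWeight_natCons _ _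

theorem apply_mul_two_pow_le_binWeight (α : ℕ →₀ ℕ) (i : ℕ) : α i * 2 ^ i ≤ binWeight α := by
  by_cases hi : i ∈ α.support
  · exact single_le_sum (f := fun j => α j * 2 ^ j) (fun _ _ => Nat.zero_le _) hi
  · simp [notMem_support_iff.mp hi]

theorem finite_binWeight_eq (N : ℕ) : {α : ℕ →₀ ℕ | binWeight α = N}.Finite := by
  refine (Finset.range (N + 1) |>.finsupp fun _ => Finset.range (N + 1)).finite_toSet.subset ?_
  intro α hα
  have hle (i : ℕ) : α i * 2 ^ i ≤ N := hα ▸ apply_mul_two_pow_le_binWeight α i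
  refine Finset.mem_finsupp_iff.mpr ⟨fun i hi => ?_, fun i _ => ?_⟩
  · have h1 : 2 ^ i ≤ α i * 2 ^ i :=
      Nat.le_mul_of_pos_left _ (Nat.pos_of_ne_zero (by simpa using hi))
    have h2 : i < 2 ^ i := Nat.lt_two_pow_self
    simp only [Finset.mem_range]
    linarith [hle i]
  · have h1 : α i ≤ α i * 2 ^ i := Nat.le_mul_of_pos_right _ (by positivity)
    simp only [Finset.mem_range]
    linarith [hle i]

instance (N : ℕ) (R : (ℕ →₀ ℕ) → Prop) : Finite {α : ℕ →₀ ℕ // binWeight α = N ∧ R α} :=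
  ((finite_binWeight_eq N).subset fun _ h => h.1).to_subtype

instance (x : ℤ) (R : (ℕ →₀ ℕ) → Prop) :
    Finite {α : ℕ →₀ ℕ // (binWeight α : ℤ) = x ∧ R α} :=
  ((finite_binWeight_eq x.toNat).subset fun _ h => show _ = _ by have := h.1; omega).to_subtype

theorem Nat.card_subtype_mem_and_eq_sum {ι κ : Type*} (g : ι → κ) (s : Finset κ)
    (Q : κ → ι → Prop) [∀ w, Finite {x // g x = w ∧ Q w x}] :
    Nat.card {x // g x ∈ s ∧ Q (g x) x} = ∑ w ∈ s, Nat.card {x // g x = w ∧ Q w x} := by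
  rw [← Finset.sum_coe_sort s, ← Nat.card_sigma]
  exact Nat.card_congr
    { toFun := fun x => ⟨⟨g x, x.2.1⟩, x, rfl, x.2.2⟩
      invFun := fun y => ⟨y.2, by rw [y.2.2.1]; exact y.1.2, by rw [y.2.2.1]; exact y.2.2.2⟩
      left_inv := fun _ => rfl
      right_inv := fun y => Sigma.subtype_ext (Subtype.ext y.2.2.1) rfl }

noncomputable def binCount (R : (ℕ →₀ ℕ) → Prop) (x : ℤ) : ℕ :=
  Nat.card {α : ℕ →₀ ℕ // (binWeight α : ℤ) = x ∧ R α}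

theorem binCount_of_neg (R : (ℕ →₀ ℕ) → Prop) {x : ℤ} (hx : x < 0) : binCount R x = 0 :=
  @Nat.card_of_isEmpty _ ⟨fun α => by have := α.2.1; omega⟩

theorem binCount_prop_and (P : Prop) [Decidable P] (R : (ℕ →₀ ℕ) → Prop) (x : ℤ) :
    binCount (fun α => P ∧ R α) x = if P then binCount R x else 0 := by
  by_cases hP : P <;> simp [binCount, hP]

theorem binCount_natCast_eq_sum (R : (ℕ →₀ ℕ) → Prop) (N : ℕ) :
    binCount R N =
      ∑ w ∈ range (N / 2 + 1), binCount (fun β => R (natCons (N - 2 * w) β)) w := by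
  have hcons {α : ℕ →₀ ℕ} (hα : (binWeight α : ℤ) = N) :
      natCons (N - 2 * binWeight (natTail α)) (natTail α) = α := by
    have := binWeight_eq_apply_zero_add α
    rw [show N - 2 * binWeight (natTail α) = α 0 by omega, natCons_natTail]
  let e : {α : ℕ →₀ ℕ // (binWeight α : ℤ) = N ∧ R α} ≃
      {β : ℕ →₀ ℕ // binWeight β ∈ range (N / 2 + 1) ∧ R (natCons (N - 2 * binWeight β) β)} :=
    { toFun := fun α => ⟨natTail α.1, by
          have := binWeight_eq_apply_zero_add α.1
          have := α.2.1
          rw [mem_range]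
          omega,
        (hcons α.2.1).symm ▸ α.2.2⟩
      invFun := fun β => ⟨natCons (N - 2 * binWeight β.1) β.1, by
          have := mem_range.mp β.2.1
          rw [binWeight_natCons]
          omega,
        β.2.2⟩
      left_inv := fun α => Subtype.ext (hcons α.2.1)
      right_inv := fun β => Subtype.ext (natTail_natCons _ _) }
  rw [binCount, Nat.card_congr e,
    Nat.card_subtype_mem_and_eq_sum binWeight _ fun w β => R (natCons (N - 2 * w) β)]
  refine sum_congr rfl fun w _ => Nat.card_congr (Equiv.subtypeEquivRight fun β => ?_)
  rw [Nat.cast_inj]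

def Admissible (p : ℕ) (α : ℕ →₀ ℕ) : Prop := ∀ i < p, 2 ^ (p - i) ∣ α i

theorem admissible_zero (α : ℕ →₀ ℕ) : Admissible 0 α :=
  fun _ hi => absurd hi (Nat.not_lt_zero _)

theorem admissible_succ_natCons (p a : ℕ) (β : ℕ →₀ ℕ) :
    Admissible (p + 1) (natCons a β) ↔ 2 ^ (p + 1) ∣ a ∧ Admissible p β := by
  constructor
  · intro h
    refine ⟨by simpa using h 0 p.succ_pos, fun i hi => ?_⟩
    simpa using h (i + 1) (by omega)
  · rintro ⟨h0, h⟩ (_ | i) hi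
    · simpa using h0
    · simpa using h i (by omega)

theorem r_eq_binCount (m : ℕ) : r m = binCount (Admissible (m + 1)) :=
  funext fun _ => Nat.card_congr <| Equiv.subtypeEquivRight fun _ =>
    and_congr_right fun _ => forall_congr' fun _ => by rw [Nat.lt_succ_iff]

theorem binomialDissection_one_binCount_admissible_zero :
    BinomialDissection 1 (binCount (Admissible 0)) := by
  have hsplit (n : ℤ) (e : ℕ) (he : e < 2) :
      binCount (Admissible 0) (2 * n + e) = partialSum (binCount (Admissible 0)) n := by
    rcases lt_or_ge n 0 with hn | hn
    · rw [binCount_of_neg _ (by omega), partialSum_of_neg _ hn]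
    lift n to ℕ using hn
    rw [show 2 * (n : ℤ) + e = ((2 * n + e : ℕ) : ℤ) by push_cast; ring, binCount_natCast_eq_sum,
      show (2 * n + e) / 2 = n by omega, partialSum_natCast]
    refine Finset.sum_congr rfl fun w _ => congrArg₂ _ (funext fun β => ?_) rfl
    exact propext (iff_of_true (admissible_zero _) (admissible_zero _))
  exact binomialDissection_one (fun n => by simpa using hsplit n 0 (by norm_num))
    (fun n => by simpa using hsplit n 1 (by norm_num))

theorem Finset.sum_range_mul_add_one_ite_dvd {M : Type*} [AddCommMonoid M] (f : ℕ → M) {d : ℕ}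
    (hd : 0 < d) (k : ℕ) :
    ∑ w ∈ range (d * k + 1), (if d ∣ w then f w else 0) = ∑ c ∈ range (k + 1), f (d * c) := by
  rw [← sum_filter, ← sum_image fun x _ y _ h => Nat.eq_of_mul_eq_mul_left hd h]
  congr 1
  ext w
  simp only [mem_filter, mem_range, mem_image, Nat.lt_succ_iff]
  constructor
  · rintro ⟨hw, c, rfl⟩
    exact ⟨c, Nat.le_of_mul_le_mul_left hw hd, rfl⟩
  · rintro ⟨c, hc, rfl⟩
    exact ⟨Nat.mul_le_mul_left d hc, dvd_mul_right d c⟩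

theorem binCount_admissible_succ (p : ℕ) (k : ℤ) :
    binCount (Admissible (p + 1)) (2 ^ (p + 1) * k) =
      partialSum (fun c => binCount (Admissible p) (2 ^ p * c)) k := by
  rcases lt_or_ge k 0 with hk | hk
  · rw [binCount_of_neg _ (mul_neg_of_pos_of_neg (by positivity) hk), partialSum_of_neg _ hk]
  lift k to ℕ using hk
  have hhalf : 2 ^ (p + 1) * k / 2 = 2 ^ p * k := by
    rw [pow_succ, mul_comm _ 2, mul_assoc, Nat.mul_div_cancel_left _ two_pos]
  rw [show (2 : ℤ) ^ (p + 1) * k = ((2 ^ (p + 1) * k : ℕ) : ℤ) by push_cast; ring,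
    binCount_natCast_eq_sum, hhalf, partialSum_natCast]
  simp only [admissible_succ_natCons]
  simp_rw [show ∀ c : ℕ, (2 : ℤ) ^ p * c = ((2 ^ p * c : ℕ) : ℤ) by simp]
  rw [← Finset.sum_range_mul_add_one_ite_dvd (fun w : ℕ => binCount (Admissible p) w)
    (by positivity : 0 < 2 ^ p)]
  refine Finset.sum_congr rfl fun w hw => ?_
  have hdvd : 2 ^ (p + 1) ∣ 2 ^ (p + 1) * k - 2 * w ↔ 2 ^ p ∣ w := by
    rw [pow_succ', mul_assoc, ← Nat.mul_sub, Nat.mul_dvd_mul_iff_left two_pos,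
      Nat.dvd_sub_iff_right (Nat.lt_succ_iff.mp (Finset.mem_range.mp hw)) (dvd_mul_right _ _)]
  rw [binCount_prop_and]
  exact if_congr hdvd rfl rfl

theorem binCount_admissible_two_pow_mul (p : ℕ) (k : ℤ) :
    binCount (Admissible p) (2 ^ p * k) = partialSum^[p] (binCount (Admissible 0)) k := by
  induction p generalizing k with
  | zero => simp
  | succ p ih => rw [binCount_admissible_succ, Function.iterate_succ_apply']; simp_rw [ih]

theorem S_two_pow_mul (m : ℕ) (hm : 1 ≤ m) (t : ℤ) :
    S m (2 ^ (m + 1) * t) = partialSum^[m + 1] (binCount (Admissible 0)) t := by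
  have hr (k : ℤ) : r (m - 1) (2 ^ m * k) = partialSum^[m] (binCount (Admissible 0)) k := by
    rw [r_eq_binCount, Nat.sub_add_cancel hm, binCount_admissible_two_pow_mul]
  rw [Function.iterate_succ_apply']
  rcases lt_or_ge t 0 with ht | ht
  · rw [S, if_neg fun h => (mul_neg_of_pos_of_neg (by positivity) ht).not_ge h.1,
      partialSum_of_neg _ ht]
  · rw [S, if_pos ⟨by positivity, dvd_mul_right _ _⟩, Int.mul_ediv_cancel_left _ (by positivity),
      partialSum, show (t + 1).toNat = t.toNat + 1 by omega]
    simp_rw [hr]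

theorem stmt18_general (m : ℕ) (hm : 1 ≤ m) (n' : ℕ) :
    S m (2 ^ (m + 2) * n') =
      S m (2 ^ (m + 2) * (n' : ℤ) - 2 ^ (m + 1)) +
        ∑ j ∈ Finset.range ((m + 1) / 2 + 1),
          (m + 1).choose (2 * j) *
            S m ((2 ^ (m + 2) * (n' : ℤ) - 2 * j * 2 ^ (m + 1)) / 2) := by
  have hhalf (j : ℕ) :
      (2 ^ (m + 2) * (n' : ℤ) - 2 * j * 2 ^ (m + 1)) / 2 = 2 ^ (m + 1) * (n' - j) := by
    rw [show (2 : ℤ) ^ (m + 2) * n' - 2 * j * 2 ^ (m + 1) = 2 * (2 ^ (m + 1) * (n' - j)) by ring,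
      Int.mul_ediv_cancel_left _ two_ne_zero]
  simp_rw [hhalf, show (2 : ℤ) ^ (m + 2) * n' = 2 ^ (m + 1) * (2 * n') by ring,
    show (2 : ℤ) ^ (m + 1) * (2 * n') - 2 ^ (m + 1) = 2 ^ (m + 1) * (2 * n' - 1) by ring,
    S_two_pow_mul m hm, Function.iterate_succ_apply']
  rw [partialSum_eq_partialSum_sub_one_add _ (by positivity),
    (binomialDissection_one_binCount_admissible_zero.iterate m).1 n']
  congr 1
  simp only [smul_eq_mul]
  refine (Finset.sum_subset (Finset.range_subset_range.mpr (by omega)) fun j _ hj => ?_).symm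
  rw [Finset.mem_range, not_lt] at hj
  rw [Nat.choose_eq_zero_of_lt (by omega), zero_mul]

theorem stmt18 (m : ℕ) (hm : 1 ≤ m) (n' : ℕ) (hn' : 1 ≤ n') :
    S m (2 ^ (m + 2) * n') =
      S m (2 ^ (m + 2) * (n' : ℤ) - 2 ^ (m + 1)) +
        ∑ j ∈ Finset.range ((m + 1) / 2 + 1),
          (m + 1).choose (2 * j) *
            S m ((2 ^ (m + 2) * (n' : ℤ) - 2 * j * 2 ^ (m + 1)) / 2) :=
  stmt18_general m hm n'
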